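/- For the 2k-state binary DFA with states q₁,…,q_k, p₁,…,p_k and transitions q_i·a = q_{i+1} (i<k), q_k·a = q₁, p_i·a = p_{i+1} (i<k), p_k·a undefined, q₁·b = p₁, q₂·b = q_k, q_i·b = q_{i-1} (2<i≤k), p_i·b = q₁ for all i, the word a^k b a^{k+1} b a^k (a a b a^k)^{k-2} is a mortal word. -/
import Mathlib

/-- Running a DFA with partial transition function `δ` on a word from state `q`;
`none` means undefined. -/
def dfaRun {Q σ : Type*} (δ : Q → σ → Option Q) : Q → List σ → Option Q
  | q, [] => some q
  | q, a :: w =>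
    match δ q a with
    | none => none
    | some q2 => dfaRun δ q2 w


/-- The `2k`-state binary DFA with a cycle `q₁ → … → q_k → q₁` under `a`
(states `Sum.inl i`, with `Sum.inl i` being `q_{i+1}`), a tail `p₁ → … → p_k`
under `a` with `p_k · a` undefined (states `Sum.inr i`, with `Sum.inr i` being
`p_{i+1}`), and `b` acting by `q₁ · b = p₁`, `q₂ · b = q_k`, `q_i · b = q_{i-1}`
for `2 < i ≤ k`, `p_i · b = q₁`. Letter `0` is `a`, letter `1` is `b`. -/
def tailDFA (k : ℕ) : (Fin k ⊕ Fin k) → Fin 2 → Option (Fin k ⊕ Fin k) := fun st x =>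
  match st with
  | Sum.inl i =>
    if x.val = 0 then
      some (Sum.inl ⟨(i.val + 1) % k, Nat.mod_lt _ (by have := i.isLt; omega)⟩)
    else if i.val = 0 then some (Sum.inr ⟨0, by have := i.isLt; omega⟩)
    else if i.val = 1 then some (Sum.inl ⟨k - 1, by have := i.isLt; omega⟩)
    else some (Sum.inl ⟨i.val - 1, by have := i.isLt; omega⟩)
  | Sum.inr i =>
    if x.val = 0 then
      if h : i.val + 1 < k then some (Sum.inr ⟨i.val + 1, h⟩) else none
    else some (Sum.inl ⟨0, by have := i.isLt; omega⟩)

/-- The word `a^k b a^{k+1} b a^k (a a b a^k)^{k-2}`. -/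
def tailWord (k : ℕ) : List (Fin 2) :=
  List.replicate k 0 ++ [1] ++ List.replicate (k + 1) 0 ++ [1] ++ List.replicate k 0 ++
    (List.replicate (k - 2) ([0, 0, 1] ++ List.replicate k (0 : Fin 2))).flatten

theorem dfaRun_append {Q σ : Type*} (δ : Q → σ → Option Q) (q : Q) (u v : List σ) :
    dfaRun δ q (u ++ v) = (dfaRun δ q u).bind (fun q' => dfaRun δ q' v) := by
  induction u generalizing q with
  | nil => simp [dfaRun]
  | cons a u ih =>
    simp only [List.cons_append, dfaRun]
    cases δ q a with
    | none => rfl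
    | some q2 => exact ih q2

theorem dfaRun_singleton {Q σ : Type*} (δ : Q → σ → Option Q) (q : Q) (x : σ) :
    dfaRun δ q [x] = δ q x := by
  simp only [dfaRun]
  cases δ q x <;> rfl

theorem tailDFA_a_inl (k : ℕ) (i : Fin k) :
    tailDFA k (Sum.inl i) 0 =
      some (Sum.inl ⟨(i.val + 1) % k, Nat.mod_lt _ (by have := i.isLt; omega)⟩) := by
  simp [tailDFA]

theorem tailDFA_b_inl0 (k : ℕ) (i : Fin k) (h : i.val = 0) :
    tailDFA k (Sum.inl i) 1 = some (Sum.inr ⟨0, by have := i.isLt; omega⟩) := by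
  simp [tailDFA, h]

theorem tailDFA_b_inl1 (k : ℕ) (i : Fin k) (h : i.val = 1) :
    tailDFA k (Sum.inl i) 1 = some (Sum.inl ⟨k - 1, by have := i.isLt; omega⟩) := by
  simp [tailDFA, h]

theorem tailDFA_b_inl2 (k : ℕ) (i : Fin k) (h : 2 ≤ i.val) :
    tailDFA k (Sum.inl i) 1 = some (Sum.inl ⟨i.val - 1, by have := i.isLt; omega⟩) := by
  have h0 : i.val ≠ 0 := by omega
  have h1 : i.val ≠ 1 := by omega
  simp [tailDFA, h0, h1]

theorem runA_inl (k : ℕ) (m : ℕ) (i j : Fin k) (hj : (i.val + m) % k = j.val) :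
    dfaRun (tailDFA k) (Sum.inl i) (List.replicate m 0) = some (Sum.inl j) := by
  induction m generalizing i with
  | zero =>
    have : i = j := by
      apply Fin.ext
      rw [← hj]
      exact (Nat.mod_eq_of_lt (i.isLt)).symm
    simp [dfaRun, this]
  | succ m ih =>
    rw [List.replicate_succ]
    simp only [dfaRun, tailDFA_a_inl]
    apply ih
    rw [Nat.mod_add_mod]
    rw [← hj]
    ring_nf

theorem runA_inr (k : ℕ) (m : ℕ) (i : Fin k) (h : k ≤ i.val + m) :
    dfaRun (tailDFA k) (Sum.inr i) (List.replicate m 0) = none := by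
  induction m generalizing i with
  | zero => exact absurd i.isLt (by omega)
  | succ m ih =>
    rw [List.replicate_succ]
    have hx : (tailDFA k) (Sum.inr i) 0 =
        if hlt : i.val + 1 < k then some (Sum.inr ⟨i.val + 1, hlt⟩) else none := by
      simp [tailDFA]
    simp only [dfaRun, hx]
    by_cases hlt : i.val + 1 < k
    · simp only [dif_pos hlt]
      exact ih ⟨i.val + 1, hlt⟩ (by simp; omega)
    · simp [dif_neg hlt]

theorem runBlocks (k : ℕ) (hk : 2 ≤ k) (m : ℕ) (j : Fin k) (h1 : 1 ≤ j.val)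
    (h2 : j.val < k - 1) (h3 : k - 1 - j.val ≤ m) :
    dfaRun (tailDFA k) (Sum.inl j)
      ((List.replicate m ([0, 0, 1] ++ List.replicate k (0 : Fin 2))).flatten) = none := by
  induction m generalizing j with
  | zero => omega
  | succ m ih =>
    rw [List.replicate_succ, List.flatten_cons]
    have hsplit : ([0, 0, 1] ++ List.replicate k (0 : Fin 2))
        = (List.replicate 2 (0 : Fin 2) ++ [1]) ++ List.replicate k (0 : Fin 2) := rfl
    rw [hsplit]
    simp only [dfaRun_append, dfaRun_singleton]
    by_cases hc : j.val = k - 2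
    · -- goes to inl 0 after aa, then b to inr 0, then a^k kills it
      have hv : j.val + 2 = k := by omega
      rw [runA_inl k 2 j ⟨0, by omega⟩ (by show (j.val + 2) % k = 0; simp [hv])]
      rw [Option.bind_some, tailDFA_b_inl0 k ⟨0, by omega⟩ rfl, Option.bind_some]
      rw [runA_inr k k ⟨0, by omega⟩ (by simp)]
      rfl
    · -- j ≤ k - 3
      have hj3 : j.val + 2 < k := by omega
      rw [runA_inl k 2 j ⟨j.val + 2, hj3⟩ (by simp [Nat.mod_eq_of_lt hj3])]
      rw [Option.bind_some, tailDFA_b_inl2 k ⟨j.val + 2, hj3⟩ (by simp), Option.bind_some]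
      have hj1 : j.val + 1 < k := by omega
      have hm2 : (j.val + 2 - 1 + k) % k = j.val + 1 := by
        rw [Nat.add_mod_right]; rw [Nat.mod_eq_of_lt (by omega)]; omega
      rw [runA_inl k k ⟨j.val + 2 - 1, by omega⟩ ⟨j.val + 1, hj1⟩ hm2]
      rw [Option.bind_some]
      exact ih ⟨j.val + 1, hj1⟩ (by show 1 ≤ j.val + 1; omega)
        (by show j.val + 1 < k - 1; omega) (by show k - 1 - (j.val + 1) ≤ m; omega)

/-- The word `a^k b a^{k+1} b a^k (a a b a^k)^{k-2}` is mortal for this DFA. -/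
theorem stmt16 (k : ℕ) (hk : 2 ≤ k) :
    ∀ q : Fin k ⊕ Fin k, dfaRun (tailDFA k) q (tailWord k) = none := by
  intro q
  rw [tailWord]
  simp only [dfaRun_append, dfaRun_singleton]
  cases q with
  | inr i =>
    rw [runA_inr k k i (by omega)]
    rfl
  | inl i =>
    rw [runA_inl k k i i (by rw [Nat.add_mod_right]; exact Nat.mod_eq_of_lt i.isLt)]
    rw [Option.bind_some]
    obtain h0 | h1 | h2 : i.val = 0 ∨ i.val = 1 ∨ 2 ≤ i.val := by omega
    · rw [tailDFA_b_inl0 k i h0, Option.bind_some]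
      rw [runA_inr k (k + 1) ⟨0, by omega⟩ (by simp)]
      rfl
    · rw [tailDFA_b_inl1 k i h1, Option.bind_some]
      have hmod : (k - 1 + (k + 1)) % k = 0 := by
        have : k - 1 + (k + 1) = 2 * k := by omega
        rw [this]
        simp [Nat.mul_mod_right]
      rw [runA_inl k (k + 1) ⟨k - 1, by omega⟩ ⟨0, by omega⟩ hmod]
      rw [Option.bind_some, tailDFA_b_inl0 k ⟨0, by omega⟩ rfl, Option.bind_some]
      rw [runA_inr k k ⟨0, by omega⟩ (by simp)]
      rfl
    · rw [tailDFA_b_inl2 k i h2, Option.bind_some]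
      have hi : i.val < k := i.isLt
      have hmod : (i.val - 1 + (k + 1)) % k = i.val := by
        have : i.val - 1 + (k + 1) = i.val + k := by omega
        rw [this, Nat.add_mod_right]
        exact Nat.mod_eq_of_lt hi
      rw [runA_inl k (k + 1) ⟨i.val - 1, by omega⟩ ⟨i.val, hi⟩ hmod]
      rw [Option.bind_some, tailDFA_b_inl2 k ⟨i.val, hi⟩ h2, Option.bind_some]
      have hm3 : (i.val - 1 + k) % k = i.val - 1 := by
        rw [Nat.add_mod_right]; exact Nat.mod_eq_of_lt (by omega)
      rw [runA_inl k k ⟨i.val - 1, by omega⟩ ⟨i.val - 1, by omega⟩ hm3]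
      rw [Option.bind_some]
      exact runBlocks k hk (k - 2) ⟨i.val - 1, by omega⟩ (by show 1 ≤ i.val - 1; omega)
        (by show i.val - 1 < k - 1; omega) (by show k - 1 - (i.val - 1) ≤ k - 2; omega)
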